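/- For every function δ₀ : ℝ → ℝ mapping (0,2] into (0,1] there exists a constant r₁ with 0 ≤ r₁ < 1 such that: for every real Banach space E for which δ₀ is a modulus of uniform convexity, every triple U, V, W of invertible linear isometries of E satisfying the Heisenberg relations, all n, m ∈ ℕ with 1 ≤ m ≤ 2^{n−1}, and every ζ ∈ E with ‖ζ − W^m ζ‖ ≥ (1/2)·‖ζ‖, one has ‖ X₀ ∘ Y^n ζ ‖ ≤ r₁·‖ζ‖, where X₀ = (I + U)/2 and Y^n = 2^{−n} ∑_{b=0}^{2^n−1} V^b. -/
import Mathlib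


/-- `δ : ℝ → ℝ` is a *modulus of uniform convexity* for `E`: it maps `(0,2]` into `(0,1]` and
for every `ε ∈ (0,2]` and all unit vectors `ξ, η` with `‖ξ - η‖ ≥ ε` one has
`‖(ξ + η)/2‖ ≤ 1 - δ ε`. -/
def IsUCModulus (E : Type*) [NormedAddCommGroup E] [NormedSpace ℝ E] (δ : ℝ → ℝ) : Prop :=
  (∀ ε : ℝ, 0 < ε → ε ≤ 2 → 0 < δ ε ∧ δ ε ≤ 1) ∧
    ∀ ε : ℝ, 0 < ε → ε ≤ 2 → ∀ ξ η : E, ‖ξ‖ = 1 → ‖η‖ = 1 → ε ≤ ‖ξ - η‖ →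
      ‖(2⁻¹ : ℝ) • (ξ + η)‖ ≤ 1 - δ ε

/-- `U, V, W` satisfy the Heisenberg relations `W = U⁻¹V⁻¹UV`, `UW = WU`, `VW = WV`
(the multiplication on `E ≃ₗᵢ[ℝ] E` is composition, `(e₁ * e₂) x = e₁ (e₂ x)`). -/
def HeisenbergRel {E : Type*} [NormedAddCommGroup E] [NormedSpace ℝ E]
    (U V W : E ≃ₗᵢ[ℝ] E) : Prop :=
  W = U⁻¹ * V⁻¹ * U * V ∧ U * W = W * U ∧ V * W = W * V

/-- The bounded operator on `E` underlying an invertible linear isometry. -/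
noncomputable def isomCLM {E : Type*} [NormedAddCommGroup E] [NormedSpace ℝ E]
    (U : E ≃ₗᵢ[ℝ] E) : E →L[ℝ] E :=
  U.toLinearIsometry.toContinuousLinearMap

/-- The averaging operator `2^{-d} ∑_{a=0}^{2^d - 1} U^a`. -/
noncomputable def avgOp {E : Type*} [NormedAddCommGroup E] [NormedSpace ℝ E]
    (U : E ≃ₗᵢ[ℝ] E) (d : ℕ) : E →L[ℝ] E :=
  ((2 : ℝ) ^ d)⁻¹ • ∑ a ∈ Finset.range (2 ^ d), isomCLM (U ^ a)

/-- Commutation rule `U V^b = V^b U W^b` derived from the Heisenberg relations. -/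
lemma heis_comm_pow {E : Type*} [NormedAddCommGroup E] [NormedSpace ℝ E]
    {U V W : E ≃ₗᵢ[ℝ] E} (hH : HeisenbergRel U V W) (b : ℕ) :
    U * V ^ b = V ^ b * (U * W ^ b) := by
  obtain ⟨h1, _h2, h3⟩ := hH
  have hc : Commute V W := h3
  have huv : U * V = V * (U * W) := by
    rw [h1]; group
  induction b with
  | zero => simp
  | succ b ih =>
    have hcb : W ^ b * V = V * W ^ b := ((hc.pow_right b).symm).eq
    calc U * V ^ (b + 1) = (U * V ^ b) * V := by rw [pow_succ, mul_assoc]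
      _ = V ^ b * (U * (W ^ b * V)) := by rw [ih]; group
      _ = V ^ b * (U * (V * W ^ b)) := by rw [hcb]
      _ = V ^ b * ((U * V) * W ^ b) := by group
      _ = V ^ b * ((V * (U * W)) * W ^ b) := by rw [huv]
      _ = V ^ (b + 1) * (U * W ^ (b + 1)) := by rw [pow_succ, pow_succ]; group

/-- Summation over pairs `(b, b+m)`. -/
lemma heis_pair_sum (g : ℕ → ℝ) (m : ℕ) (P : ℝ)
    (hpair : ∀ b, g b + g (b + m) ≤ P) (q : ℕ) :
    ∑ b ∈ Finset.range (q * (2 * m)), g b ≤ q * (m * P) := by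
  induction q with
  | zero => simp
  | succ q ih =>
    have hsplit : (q + 1) * (2 * m) = q * (2 * m) + (m + m) := by ring
    rw [hsplit, Finset.sum_range_add]
    have hinner : ∑ i ∈ Finset.range (m + m), g (q * (2 * m) + i) ≤ m * P := by
      rw [Finset.sum_range_add, ← Finset.sum_add_distrib]
      have : ∀ i ∈ Finset.range m,
          g (q * (2 * m) + i) + g (q * (2 * m) + (m + i)) ≤ P := by
        intro i _
        have := hpair (q * (2 * m) + i)
        have harith : q * (2 * m) + i + m = q * (2 * m) + (m + i) := by ring
        rwa [harith] at this
      calc ∑ i ∈ Finset.range m, (g (q * (2 * m) + i) + g (q * (2 * m) + (m + i)))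
          ≤ ∑ _i ∈ Finset.range m, P := Finset.sum_le_sum this
        _ = m * P := by simp [mul_comm]
    push_cast
    nlinarith [ih]

set_option maxHeartbeats 1000000 in
theorem heisenberg_X0_Yn_inequality.{u}
    (δ₀ : ℝ → ℝ) (hδ₀ : ∀ ε : ℝ, 0 < ε → ε ≤ 2 → 0 < δ₀ ε ∧ δ₀ ε ≤ 1) :
    ∃ r₁ : ℝ, 0 ≤ r₁ ∧ r₁ < 1 ∧
      ∀ (E : Type u) [NormedAddCommGroup E] [NormedSpace ℝ E] [CompleteSpace E],
        IsUCModulus E δ₀ →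
          ∀ U V W : E ≃ₗᵢ[ℝ] E, HeisenbergRel U V W →
            ∀ n m : ℕ, 1 ≤ n → 1 ≤ m → m ≤ 2 ^ (n - 1) →
              ∀ ζ : E, 2⁻¹ * ‖ζ‖ ≤ ‖ζ - (W ^ m) ζ‖ →
                ‖(((2⁻¹ : ℝ) • (1 + isomCLM U)) * avgOp V n) ζ‖ ≤ r₁ * ‖ζ‖ := by
  obtain ⟨hδpos, hδle⟩ := hδ₀ 4⁻¹ (by norm_num) (by norm_num)
  refine ⟨1 - δ₀ 4⁻¹ / 4, by linarith, by linarith, ?_⟩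
  intro E _ _ _ hUC U V W hH n m hn hm hm2 ζ hζ
  set δ := δ₀ 4⁻¹ with hδdef
  set c := ‖ζ‖ with hc
  have hc0 : 0 ≤ c := norm_nonneg ζ
  -- express the applied operator
  set N : ℕ := 2 ^ n with hN
  have hexpand : (((2⁻¹ : ℝ) • (1 + isomCLM U)) * avgOp V n) ζ
      = (2⁻¹ * ((2 : ℝ) ^ n)⁻¹) • ∑ b ∈ Finset.range N,
          (V ^ b) (ζ + U ((W ^ b) ζ)) := by
    have h1 : (avgOp V n) ζ = ((2 : ℝ) ^ n)⁻¹ • ∑ b ∈ Finset.range N, (V ^ b) ζ := by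
      simp [avgOp, ContinuousLinearMap.sum_apply, isomCLM, hN]
    rw [ContinuousLinearMap.mul_apply, h1]
    rw [ContinuousLinearMap.smul_apply, ContinuousLinearMap.add_apply,
      ContinuousLinearMap.one_apply]
    have h2 : (isomCLM U) (((2 : ℝ) ^ n)⁻¹ • ∑ b ∈ Finset.range N, (V ^ b) ζ)
        = ((2 : ℝ) ^ n)⁻¹ • ∑ b ∈ Finset.range N, (V ^ b) (U ((W ^ b) ζ)) := by
      have : (isomCLM U) (((2 : ℝ) ^ n)⁻¹ • ∑ b ∈ Finset.range N, (V ^ b) ζ)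
          = ((2 : ℝ) ^ n)⁻¹ • ∑ b ∈ Finset.range N, U ((V ^ b) ζ) := by
        rw [map_smul, map_sum]; rfl
      rw [this]
      congr 1
      refine Finset.sum_congr rfl fun b _ => ?_
      have := congrArg (fun f : E ≃ₗᵢ[ℝ] E => f ζ) (heis_comm_pow hH b)
      simpa using this
    rw [h2, ← smul_add, smul_smul, ← Finset.sum_add_distrib]
    congr 1
    refine Finset.sum_congr rfl fun b _ => ?_
    rw [← map_add]
  set g : ℕ → ℝ := fun b => ‖ζ + U ((W ^ b) ζ)‖ with hg
  have hnorm_le : ‖(((2⁻¹ : ℝ) • (1 + isomCLM U)) * avgOp V n) ζ‖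
      ≤ (2⁻¹ * ((2 : ℝ) ^ n)⁻¹) * ∑ b ∈ Finset.range N, g b := by
    rw [hexpand, norm_smul]
    have : ‖∑ b ∈ Finset.range N, (V ^ b) (ζ + U ((W ^ b) ζ))‖
        ≤ ∑ b ∈ Finset.range N, g b := by
      refine le_trans (norm_sum_le _ _) (le_of_eq ?_)
      refine Finset.sum_congr rfl fun b _ => ?_
      exact (V ^ b).norm_map _
    have hpos : (0 : ℝ) < 2⁻¹ * ((2 : ℝ) ^ n)⁻¹ := by positivity
    rw [Real.norm_eq_abs, abs_of_pos hpos]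
    exact mul_le_mul_of_nonneg_left this (le_of_lt hpos)
  -- bounds on g
  have hgle : ∀ b, g b ≤ 2 * c := by
    intro b
    calc g b ≤ ‖ζ‖ + ‖U ((W ^ b) ζ)‖ := norm_add_le _ _
      _ = 2 * c := by rw [U.norm_map, (W ^ b).norm_map]; ring
  have hpair : ∀ b, g b + g (b + m) ≤ (4 - 2 * δ) * c := by
    intro b
    by_cases hz : ζ = 0
    · simp [hg, hz, hc]
    have hcpos : 0 < c := norm_pos_iff.mpr hz
    -- UC consequence
    have hUCs : ∀ w : E, ‖w‖ = c → c / 4 ≤ ‖ζ - w‖ → ‖ζ + w‖ ≤ 2 * (1 - δ) * c := by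
      intro w hw hdist
      have hξ : ‖c⁻¹ • ζ‖ = 1 := by
        rw [norm_smul, Real.norm_eq_abs, abs_of_pos (by positivity), ← hc]
        field_simp
      have hη : ‖c⁻¹ • w‖ = 1 := by
        rw [norm_smul, Real.norm_eq_abs, abs_of_pos (by positivity), hw]
        field_simp
      have hsub : (4 : ℝ)⁻¹ ≤ ‖c⁻¹ • ζ - c⁻¹ • w‖ := by
        rw [← smul_sub, norm_smul, Real.norm_eq_abs, abs_of_pos (by positivity)]
        rw [inv_mul_eq_div, le_div_iff₀ hcpos]
        linarith
      have := hUC.2 4⁻¹ (by norm_num) (by norm_num) (c⁻¹ • ζ) (c⁻¹ • w) hξ hη hsub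
      rw [← smul_add, smul_smul] at this
      rw [norm_smul, Real.norm_eq_abs, abs_of_pos (by positivity)] at this
      rw [← hδdef] at this
      calc ‖ζ + w‖ = (2 * c) * ((2⁻¹ * c⁻¹) * ‖ζ + w‖) := by field_simp
        _ ≤ (2 * c) * (1 - δ) := by nlinarith [this, hcpos]
        _ = 2 * (1 - δ) * c := by ring
    -- the pair of rotated vectors are far apart
    set a := U ((W ^ b) ζ) with ha
    set d := U ((W ^ (b + m)) ζ) with hd
    have hna : ‖a‖ = c := by rw [ha, U.norm_map, (W ^ b).norm_map]
    have hnd : ‖d‖ = c := by rw [hd, U.norm_map, (W ^ (b + m)) |>.norm_map]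
    have hfar : c / 2 ≤ ‖a - d‖ := by
      have h1 : a - d = U ((W ^ b) (ζ - (W ^ m) ζ)) := by
        have hpow : (W ^ (b + m)) ζ = (W ^ b) ((W ^ m) ζ) := by rw [pow_add]; rfl
        rw [ha, hd, hpow, ← map_sub, ← map_sub]
      rw [h1, U.norm_map, (W ^ b).norm_map]
      calc c / 2 = 2⁻¹ * ‖ζ‖ := by rw [← hc]; ring
        _ ≤ ‖ζ - (W ^ m) ζ‖ := hζ
    have hone : c / 4 ≤ ‖ζ - a‖ ∨ c / 4 ≤ ‖ζ - d‖ := by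
      by_contra hcon
      push_neg at hcon
      have := norm_sub_le_norm_sub_add_norm_sub a ζ d
      have h2 : ‖a - ζ‖ = ‖ζ - a‖ := norm_sub_rev _ _
      linarith [hcon.1, hcon.2]
    rcases hone with h | h
    · have h1 := hUCs a hna h
      have h2 := hgle (b + m)
      have : g b ≤ 2 * (1 - δ) * c := h1
      linarith
    · have h1 := hUCs d hnd h
      have h2 := hgle b
      have : g (b + m) ≤ 2 * (1 - δ) * c := h1
      linarith
  -- combinatorics: q = N / (2m)
  have hm1 : 1 ≤ m := hm
  have h2mN : 2 * m ≤ N := by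
    have : 2 * m ≤ 2 * 2 ^ (n - 1) := by omega
    have h2 : 2 * 2 ^ (n - 1) = 2 ^ n := by
      rw [← pow_succ']
      congr 1
      omega
    omega
  set q : ℕ := N / (2 * m) with hq
  set r : ℕ := N % (2 * m) with hr
  have h2m0 : 0 < 2 * m := by omega
  have hqr : q * (2 * m) + r = N := by
    rw [hq, hr]
    exact Nat.div_add_mod' N (2 * m)
  have hq1 : 1 ≤ q := by
    rw [hq]
    exact Nat.one_le_div_iff h2m0 |>.mpr h2mN
  have hrlt : r < 2 * m := Nat.mod_lt _ h2m0
  have hsum : ∑ b ∈ Finset.range N, g b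
      ≤ q * (m * ((4 - 2 * δ) * c)) + r * (2 * c) := by
    rw [← hqr, Finset.sum_range_add]
    have h1 := heis_pair_sum g m ((4 - 2 * δ) * c) hpair q
    have h2 : ∑ i ∈ Finset.range r, g (q * (2 * m) + i) ≤ r * (2 * c) := by
      calc ∑ i ∈ Finset.range r, g (q * (2 * m) + i)
          ≤ ∑ _i ∈ Finset.range r, (2 * c) := Finset.sum_le_sum fun i _ => hgle _
        _ = r * (2 * c) := by simp [mul_comm]
    linarith
  -- final numeric computation
  have hNr : ((N : ℝ)) = (2 : ℝ) ^ n := by rw [hN]; push_cast; ring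
  have hNpos : (0 : ℝ) < (N : ℝ) := by rw [hNr]; positivity
  have hQ : (1 : ℝ) ≤ (q : ℝ) := by exact_mod_cast hq1
  have hM : (1 : ℝ) ≤ (m : ℝ) := by exact_mod_cast hm1
  have hR : ((r : ℝ)) < 2 * (m : ℝ) := by exact_mod_cast hrlt
  have hNeq : (q : ℝ) * (2 * (m : ℝ)) + (r : ℝ) = (N : ℝ) := by exact_mod_cast hqr
  have hR0 : (0 : ℝ) ≤ (r : ℝ) := Nat.cast_nonneg r
  calc ‖(((2⁻¹ : ℝ) • (1 + isomCLM U)) * avgOp V n) ζ‖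
      ≤ (2⁻¹ * ((2 : ℝ) ^ n)⁻¹) * ∑ b ∈ Finset.range N, g b := hnorm_le
    _ ≤ (2⁻¹ * ((2 : ℝ) ^ n)⁻¹) * (q * (m * ((4 - 2 * δ) * c)) + r * (2 * c)) := by
        apply mul_le_mul_of_nonneg_left hsum (by positivity)
    _ ≤ (1 - δ / 4) * c := by
        rw [← hNr]
        rw [mul_comm (2⁻¹ : ℝ) _, mul_assoc]
        rw [inv_mul_le_iff₀ hNpos]
        have hR2 : (r : ℝ) ≤ 2 * (m : ℝ) * (q : ℝ) := by nlinarith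
        rw [← hNeq]
        nlinarith [mul_nonneg (mul_nonneg hδpos.le hc0) (sub_nonneg.mpr hR2), hδpos.le, hc0]
    _ = (1 - δ₀ 4⁻¹ / 4) * ‖ζ‖ := by rw [← hδdef, ← hc]
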